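/- Let κ > 0, let G, g be positive increasing functions with G(1) ≥ 1, g(1) ≥ 1, let ω ∈ NR(κ,G), α ∈ ℂ, and N ≥ 1 an integer. If there exists m ∈ ℤ^d with 0 < |m| ≤ N and |α − iπ⟨m,ω⟩| < κ/(4 G(N) g(|m|)), then for all m' ∈ ℤ^d with 0 < |m'| ≤ N one has |α − iπ⟨m+m',ω⟩| ≥ κ/(G(N) g(|m'|)); in particular α − iπ⟨m,ω⟩ ∈ NR^N_ω(κ/G(N), g). -/

import Mathlib

/-
Write `X = α - iπ⟨m,ω⟩` and `c = κ / G(N)`. The hypothesis on `α` gives `‖X‖ ≤ c / 4`, while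
the Diophantine condition and monotonicity of `G` give `π |⟨m',ω⟩| ≥ π c ≥ 3c` for every
`0 < |m'| ≤ N`. By the reverse triangle inequality `‖X - iπ⟨m',ω⟩‖ ≥ 3c - c/4 ≥ c`, and
`c ≥ κ / (G(N) g(|m'|))` because `g ≥ 1`. Since `⟨m+m',ω⟩ = ⟨m,ω⟩ + ⟨m',ω⟩`, the two claims
are the same inequality.
-/

open scoped BigOperators

/-- `⟨m,ω⟩ = ∑ m_j ω_j`. -/
noncomputable def zdot {d : ℕ} (m : Fin d → ℤ) (ω : Fin d → ℝ) : ℝ :=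
  ∑ j, (m j : ℝ) * ω j

/-- `|m| = ∑ |m_j|`, as a real number. -/
noncomputable def znorm {d : ℕ} (m : Fin d → ℤ) : ℝ := ((∑ j, |m j| : ℤ) : ℝ)

lemma one_le_znorm {d : ℕ} {m : Fin d → ℤ} (hm : m ≠ 0) : 1 ≤ znorm m := by
  obtain ⟨j, hj⟩ := Function.ne_iff.mp hm
  have : |m j| ≤ ∑ i, |m i| :=
    Finset.single_le_sum (f := fun i => |m i|) (fun i _ => abs_nonneg _) (Finset.mem_univ j)
  unfold znorm
  exact_mod_cast (Int.one_le_abs hj).trans this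

lemma zdot_add {d : ℕ} (m m' : Fin d → ℤ) (ω : Fin d → ℝ) :
    zdot (m + m') ω = zdot m ω + zdot m' ω := by
  simp only [zdot, ← Finset.sum_add_distrib, Pi.add_apply, Int.cast_add, add_mul]

lemma norm_pi_mul_I_mul_ofReal (x : ℝ) :
    ‖(Real.pi : ℂ) * Complex.I * (x : ℂ)‖ = Real.pi * |x| := by
  simp [abs_of_pos Real.pi_pos, Real.norm_eq_abs]

lemma one_le_of_monotoneOn_Ici {f : ℝ → ℝ} (hf : MonotoneOn f (Set.Ici 1)) (hf1 : 1 ≤ f 1)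
    {t : ℝ} (ht : 1 ≤ t) : 1 ≤ f t :=
  hf1.trans (hf Set.self_mem_Ici ht ht)

lemma le_norm_sub_of_norm_le_quarter {E : Type*} [SeminormedAddCommGroup E] {x y : E} {c : ℝ}
    (hx : ‖x‖ ≤ c / 4) (hy : 3 * c ≤ ‖y‖) : c ≤ ‖x - y‖ := by
  have := norm_sub_norm_le y x
  rw [norm_sub_rev y x] at this
  linarith [norm_nonneg x]

lemma div_le_abs_zdot {d : ℕ} {κ : ℝ} (hκ : 0 ≤ κ) {G : ℝ → ℝ}
    (hGpos : ∀ t ≥ (1 : ℝ), 0 < G t) (hGmono : MonotoneOn G (Set.Ici 1)) {ω : Fin d → ℝ}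
    (hω : ∀ m : Fin d → ℤ, m ≠ 0 → κ / G (znorm m) ≤ |zdot m ω|)
    {m : Fin d → ℤ} (hm : m ≠ 0) {t : ℝ} (hmt : znorm m ≤ t) : κ / G t ≤ |zdot m ω| := by
  have h1m := one_le_znorm hm
  exact (div_le_div_of_nonneg_left hκ (hGpos _ h1m) (hGmono h1m (h1m.trans hmt) hmt)).trans
    (hω m hm)

theorem stmt4_general {d : ℕ} (κ : ℝ) (hκ : 0 < κ) (G g : ℝ → ℝ)
    (hGpos : ∀ t ≥ (1 : ℝ), 0 < G t)
    (hGmono : MonotoneOn G (Set.Ici 1)) (hgmono : MonotoneOn g (Set.Ici 1))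
    (hg1 : 1 ≤ g 1)
    (ω : Fin d → ℝ)
    (hω : ∀ m : Fin d → ℤ, m ≠ 0 → κ / G (znorm m) ≤ |zdot m ω|)
    (α : ℂ) (N : ℕ)
    (m : Fin d → ℤ) (hm0 : m ≠ 0)
    (hres : ‖α - (Real.pi : ℂ) * Complex.I * (zdot m ω : ℂ)‖
      < κ / (4 * G N * g (znorm m))) :
    (∀ m' : Fin d → ℤ, m' ≠ 0 → znorm m' ≤ N →
      κ / (G N * g (znorm m')) ≤
        ‖α - (Real.pi : ℂ) * Complex.I * (zdot (m + m') ω : ℂ)‖) ∧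
    (∀ m' : Fin d → ℤ, m' ≠ 0 → znorm m' ≤ N →
      κ / (G N * g (znorm m')) ≤
        ‖(α - (Real.pi : ℂ) * Complex.I * (zdot m ω : ℂ))
          - (Real.pi : ℂ) * Complex.I * (zdot m' ω : ℂ)‖) := by
  have shifted : ∀ m' : Fin d → ℤ, m' ≠ 0 → znorm m' ≤ N →
      κ / (G N * g (znorm m')) ≤
        ‖(α - (Real.pi : ℂ) * Complex.I * (zdot m ω : ℂ))
          - (Real.pi : ℂ) * Complex.I * (zdot m' ω : ℂ)‖ := by
    intro m' hm' hm'N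
    have hGN : 0 < G N := hGpos _ ((one_le_znorm hm').trans hm'N)
    have hgm := one_le_of_monotoneOn_Ici hgmono hg1 (one_le_znorm hm0)
    have hgm' := one_le_of_monotoneOn_Ici hgmono hg1 (one_le_znorm hm')
    have hX : ‖α - (Real.pi : ℂ) * Complex.I * (zdot m ω : ℂ)‖ ≤ κ / G N / 4 := by
      refine hres.le.trans ?_
      rw [div_div, div_le_div_iff_of_pos_left hκ (by positivity) (by positivity)]
      nlinarith
    have hY : 3 * (κ / G N) ≤ ‖(Real.pi : ℂ) * Complex.I * (zdot m' ω : ℂ)‖ := by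
      rw [norm_pi_mul_I_mul_ofReal]
      gcongr
      · exact Real.pi_gt_three.le
      · exact div_le_abs_zdot hκ.le hGpos hGmono hω hm' hm'N
    calc κ / (G N * g (znorm m')) ≤ κ / G N :=
          div_le_div_of_nonneg_left hκ.le hGN (le_mul_of_one_le_right hGN.le hgm')
      _ ≤ _ := le_norm_sub_of_norm_le_quarter hX hY
  refine ⟨fun m' hm' hm'N => ?_, shifted⟩
  convert shifted m' hm' hm'N using 2
  rw [zdot_add]
  push_cast
  ring

/-- if `ω ∈ NR(κ,G)` and `α` is `κ/(4G(N)g(|m|))`-close to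
`iπ⟨m,ω⟩` for some `0 < |m| ≤ N`, then for every `m'` with `0 < |m'| ≤ N`,
`|α − iπ⟨m+m',ω⟩| ≥ κ/(G(N)g(|m'|))`; in particular
`α − iπ⟨m,ω⟩ ∈ NR^N_ω(κ/G(N), g)`. -/
theorem stmt4 {d : ℕ} (κ : ℝ) (hκ : 0 < κ) (G g : ℝ → ℝ)
    (hGpos : ∀ t ≥ (1 : ℝ), 0 < G t) (hgpos : ∀ t ≥ (1 : ℝ), 0 < g t)
    (hGmono : MonotoneOn G (Set.Ici 1)) (hgmono : MonotoneOn g (Set.Ici 1))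
    (hG1 : 1 ≤ G 1) (hg1 : 1 ≤ g 1)
    (ω : Fin d → ℝ)
    (hω : ∀ m : Fin d → ℤ, m ≠ 0 → κ / G (znorm m) ≤ |zdot m ω|)
    (α : ℂ) (N : ℕ) (hN : 1 ≤ N)
    (m : Fin d → ℤ) (hm0 : m ≠ 0) (hmN : znorm m ≤ N)
    (hres : ‖α - (Real.pi : ℂ) * Complex.I * (zdot m ω : ℂ)‖
      < κ / (4 * G N * g (znorm m))) :
    (∀ m' : Fin d → ℤ, m' ≠ 0 → znorm m' ≤ N →
      κ / (G N * g (znorm m')) ≤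
        ‖α - (Real.pi : ℂ) * Complex.I * (zdot (m + m') ω : ℂ)‖) ∧
    (∀ m' : Fin d → ℤ, m' ≠ 0 → znorm m' ≤ N →
      κ / (G N * g (znorm m')) ≤
        ‖(α - (Real.pi : ℂ) * Complex.I * (zdot m ω : ℂ))
          - (Real.pi : ℂ) * Complex.I * (zdot m' ω : ℂ)‖) :=
  stmt4_general κ hκ G g hGpos hGmono hgmono hg1 ω hω α N m hm0 hres
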